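/- arXiv:2107.13951 — 7 statements merged into one kernel-verified Lean document; each statement's English description precedes it below -/
import Mathlib

section
/- Let l, k be integers with l ≠ 0 and l dividing k(k−1), let r ∈ ℕ, and let χ : ℤ → {1,…,r} be any finite coloring of ℤ. Then for every m ∈ ℕ there exist integers x, y, z and a color t such that for all i, j ∈ {0, 1, …, m}, the unique integer w satisfying l·w + k = (l·x + k)·(l·y + k)^j·(l·z + k)^{i·j} has χ(w) = t. -/
/-! Since `k² ≡ k (mod l)`, every power `(l + k)^(n+1)` has the form `l·w + k`, so
coloring `n ↦ χ(w_n)` transports the problem to the exponents. With `x = w_b` and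
`y = z = w_{a-1}` the target product is `(l + k)^(b + 1 + a·j·(i+1))`, and van der Waerden's
theorem (as a monochromatic homothetic copy `a·S + b` of `S = {j·(i+1) : i, j ≤ m}`) makes all
these exponents one color. -/

theorem Int.pow_succ_modEq_self_of_dvd_mul_sub_one {l k : ℤ} (hdvd : l ∣ k * (k - 1)) (n : ℕ) :
    k ^ (n + 1) ≡ k [ZMOD l] := by
  have hsq : k * k ≡ k [ZMOD l] :=
    (Int.modEq_iff_dvd.mpr (by simpa [mul_sub] using hdvd)).symm
  induction n with
  | zero => simp
  | succ n ih => rw [pow_succ]; exact (ih.mul_right k).trans hsq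

theorem Int.exists_mul_add_eq_pow_succ {l k : ℤ} (hdvd : l ∣ k * (k - 1)) (u : ℤ) (n : ℕ) :
    ∃ w : ℤ, l * w + k = (l * u + k) ^ (n + 1) := by
  have hmod : (l * u + k) ^ (n + 1) ≡ k [ZMOD l] :=
    ((Int.modEq_iff_dvd.mpr (by simp)).symm.pow (n + 1)).trans
      (Int.pow_succ_modEq_self_of_dvd_mul_sub_one hdvd n)
  obtain ⟨w, hw⟩ := Int.modEq_iff_dvd.mp hmod.symm
  exact ⟨w, by linarith⟩

theorem exists_mono_mul_succ_homothetic {κ : Type*} [Finite κ] (f : ℕ → κ) (m : ℕ) :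
    ∃ a > 0, ∃ b : ℕ, ∃ t : κ, ∀ i j : ℕ, i ≤ m → j ≤ m → f (a * (j * (i + 1)) + b) = t := by
  obtain ⟨a, ha, b, t, hmono⟩ :=
    Combinatorics.exists_mono_homothetic_copy (Finset.range (m * (m + 1) + 1)) f
  refine ⟨a, ha, b, t, fun i j hi hj => hmono _ ?_⟩
  rw [Finset.mem_range, Nat.lt_succ_iff]
  exact Nat.mul_le_mul hj (Nat.succ_le_succ hi)

theorem stmt3_general (l k : ℤ) (hdvd : l ∣ k * (k - 1)) (r : ℕ)
    (χ : ℤ → Fin r) (m : ℕ) :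
    ∃ x y z : ℤ, ∃ t : Fin r, ∀ i j : ℕ, i ≤ m → j ≤ m →
      ∃ w : ℤ, l * w + k = (l * x + k) * (l * y + k) ^ j * (l * z + k) ^ (i * j) ∧ χ w = t := by
  choose w hw using Int.exists_mul_add_eq_pow_succ hdvd 1
  obtain ⟨a, ha, b, t, hmono⟩ := exists_mono_mul_succ_homothetic (fun n => χ (w n)) m
  refine ⟨w b, w (a - 1), w (a - 1), t, fun i j hi hj =>
    ⟨w (a * (j * (i + 1)) + b), ?_, hmono i j hi hj⟩⟩
  rw [hw, hw, hw, Nat.sub_add_cancel ha, ← pow_mul, ← pow_mul, ← pow_add, ← pow_add]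
  ring_nf

/-- Symmetric geo-arithmetic version with only the `⊛` operation: for every finite coloring
of `ℤ` and every `m`, there are `x, y, z` such that all the integers `w` with
`l·w + k = (l·x + k)·(l·y + k)^j·(l·z + k)^{i·j}`, `0 ≤ i, j ≤ m`, have the same color. -/
theorem stmt3 (l k : ℤ) (hl : l ≠ 0) (hdvd : l ∣ k * (k - 1)) (r : ℕ)
    (χ : ℤ → Fin r) (m : ℕ) :
    ∃ x y z : ℤ, ∃ t : Fin r, ∀ i j : ℕ, i ≤ m → j ≤ m →
      ∃ w : ℤ, l * w + k = (l * x + k) * (l * y + k) ^ j * (l * z + k) ^ (i * j) ∧ χ w = t :=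
  stmt3_general l k hdvd r χ m
end

section
/- Let l, k be positive integers with l dividing k(k−1), and let A be a subset of the positive integers that is piecewise syndetic in the semigroup (ℕ, ⊛). Then for all m, n ∈ ℕ there exist positive integers a₀, a₁, …, a_m such that {a₀ + i₁·a₁ + ⋯ + i_m·a_m : i₁, …, i_m ∈ {0, 1, …, n}} ⊆ A. -/
/-!
Since `l·(a ⊛ b) + k = (l·a + k)(l·b + k)`, the map `f ↦ g ⊛ (f ⊛ x)` is affine in `f` with
positive slope, so it maps arithmetic progressions to arithmetic progressions. Piecewise
syndeticity colours any prescribed finite set `F` by the elements of `G` that, after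
translating by a suitable `x`, send each `f` into `A`; taking for `F` a set on which every
`|G|`-colouring has a monochromatic progression of length `N + 1` (finite van der Waerden,
via Hales–Jewett) yields a progression of length `N + 1` in `A`. A progression of length
`m·n + 1` contains the required configuration with all `aⱼ` (`j ≥ 1`) equal to its difference.
-/

/-- The symmetric operation `a ⊛ b = l·a·b + k·(a+b) + (k²−k)/l` on `ℤ`. -/
def star (l k a b : ℤ) : ℤ := l * a * b + k * (a + b) + (k ^ 2 - k) / l

/-- `A` is piecewise syndetic in the semigroup of positive integers under `⊛`:
there is a finite set `G` of positive integers such that for every finite set `F` of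
positive integers there is a positive `x` with `F ⊛ x ⊆ ⋃_{t ∈ G} t⁻¹A`. -/
def PWSyndeticStar (l k : ℤ) (A : Set ℤ) : Prop :=
  ∃ G : Finset ℤ, (∀ g ∈ G, 0 < g) ∧
    ∀ F : Finset ℤ, (∀ f ∈ F, 0 < f) →
      ∃ x : ℤ, 0 < x ∧ ∀ f ∈ F, ∃ g ∈ G, star l k g (star l k f x) ∈ A

open Finset

namespace Combinatorics.Line

theorem sum_apply_sub_sum_apply {α ι G : Type*} [Fintype ι] [AddCommGroup G] (ℓ : Line α ι)
    (f : α → G) (x y : α) :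
    ∑ j, f (ℓ x j) - ∑ j, f (ℓ y j) = #{j | ℓ.idxFun j = none} • (f x - f y) := by
  rw [← sum_sub_distrib, card_filter, sum_smul]
  refine sum_congr rfl fun j _ => ?_
  cases h : ℓ.idxFun j <;> simp [h]

theorem card_filter_idxFun_eq_none_pos {α ι : Type*} [Fintype ι] (ℓ : Line α ι) :
    0 < #{j | ℓ.idxFun j = none} := by
  obtain ⟨j, hj⟩ := ℓ.proper
  exact card_pos.mpr ⟨j, by simpa using hj⟩

end Combinatorics.Line

/-- Finite van der Waerden: summing the coordinates of the points of a monochromatic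
Hales–Jewett line gives a monochromatic arithmetic progression. -/
theorem exists_finset_pos_mono_arithProg (κ : Type*) [Finite κ] (N : ℕ) :
    ∃ F : Finset ℤ, (∀ f ∈ F, 0 < f) ∧ ∀ C : F → κ, ∃ c : κ, ∃ a d : ℤ, 0 < d ∧
      ∀ i ≤ N, ∃ h : a + i * d ∈ F, C ⟨a + i * d, h⟩ = c := by
  classical
  obtain ⟨ι, _, hHJ⟩ := Combinatorics.Line.exists_mono_in_high_dimension (Fin (N + 1)) κ
  let val : (ι → Fin (N + 1)) → ℤ := fun w => 1 + ∑ j, ((w j : ℕ) : ℤ)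
  refine ⟨univ.image val, ?_, fun C => ?_⟩
  · simp only [mem_image, mem_univ, true_and, forall_exists_index, forall_apply_eq_imp_iff]
    intro w
    positivity
  obtain ⟨ℓ, c, hℓ⟩ := hHJ fun w => C ⟨val w, mem_image_of_mem val (mem_univ w)⟩
  refine ⟨c, val (ℓ 0), #{j | ℓ.idxFun j = none},
    by exact_mod_cast ℓ.card_filter_idxFun_eq_none_pos, fun i hi => ?_⟩
  have hval : val (ℓ ⟨i, by omega⟩) = val (ℓ 0) + i * #{j | ℓ.idxFun j = none} := by
    have hdiff := ℓ.sum_apply_sub_sum_apply (fun t : Fin (N + 1) => ((t : ℕ) : ℤ)) ⟨i, by omega⟩ 0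
    simp only [Fin.val_zero, Nat.cast_zero, sub_zero, nsmul_eq_mul] at hdiff
    simp only [val]
    linarith
  rw [← hval]
  exact ⟨mem_image_of_mem val (mem_univ _), hℓ _⟩

theorem star_star_eq (l k g x f : ℤ) :
    star l k g (star l k f x) =
      (l * g + k) * (l * x + k) * f +
        ((l * g + k) * (k * x + (k ^ 2 - k) / l) + k * g + (k ^ 2 - k) / l) := by
  unfold _root_.star; ring

theorem PWSyndeticStar.exists_arithProg {l k : ℤ} {A : Set ℤ} (hl : 0 < l) (hk : 0 < k)
    (hA : PWSyndeticStar l k A) (N : ℕ) : ∃ a d : ℤ, 0 < d ∧ ∀ i ≤ N, a + i * d ∈ A := by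
  obtain ⟨G, hGpos, hG⟩ := hA
  obtain ⟨F, hFpos, hvdW⟩ := exists_finset_pos_mono_arithProg G N
  obtain ⟨x, hx, hsel⟩ := hG F hFpos
  have hcolour : ∀ f : F, ∃ g : G, star l k g (star l k f x) ∈ A := fun f => by
    obtain ⟨g, hg, hgA⟩ := hsel f f.2
    exact ⟨⟨g, hg⟩, hgA⟩
  choose C hC using hcolour
  obtain ⟨g, a, d, hd, hmono⟩ := hvdW C
  have hg := hGpos g g.2
  refine ⟨star l k g (star l k a x), (l * g + k) * (l * x + k) * d, by positivity, ?_⟩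
  intro i hi
  obtain ⟨h, hc⟩ := hmono i hi
  have hmem := hC ⟨_, h⟩
  rw [hc, star_star_eq] at hmem
  rw [star_star_eq]
  convert hmem using 1
  ring

theorem stmt4_general (l k : ℤ) (hl : 0 < l) (hk : 0 < k)
    (A : Set ℤ) (hA : A ⊆ {x : ℤ | 0 < x}) (hPW : PWSyndeticStar l k A) (m n : ℕ) :
    ∃ a : Fin (m + 1) → ℤ, (∀ i, 0 < a i) ∧
      ∀ c : Fin m → ℕ, (∀ j, c j ≤ n) →
        a 0 + ∑ j : Fin m, (c j : ℤ) * a j.succ ∈ A := by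
  obtain ⟨a, d, hd, hAP⟩ := hPW.exists_arithProg hl hk (m * n)
  have ha : 0 < a := by simpa using hA (hAP 0 (Nat.zero_le _))
  refine ⟨Fin.cons a fun _ => d, Fin.cases ha fun _ => hd, fun c hc => ?_⟩
  have hsum : ∑ j, c j ≤ m * n := by
    simpa [mul_comm] using sum_le_sum fun j (_ : j ∈ univ) => hc j
  simpa [← sum_mul] using hAP _ hsum

/-- Every piecewise syndetic subset of `(ℕ, ⊛)` contains generalized arithmetic
progressions of any length and order. -/
theorem stmt4 (l k : ℤ) (hl : 0 < l) (hk : 0 < k) (hdvd : l ∣ k * (k - 1))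
    (A : Set ℤ) (hA : A ⊆ {x : ℤ | 0 < x}) (hPW : PWSyndeticStar l k A) (m n : ℕ) :
    ∃ a : Fin (m + 1) → ℤ, (∀ i, 0 < a i) ∧
      ∀ c : Fin m → ℕ, (∀ j, c j ≤ n) →
        a 0 + ∑ j : Fin m, (c j : ℤ) * a j.succ ∈ A :=
  stmt4_general l k hl hk A hA hPW m n
end

section
/- Let l, k be integers with l ≠ 0 and l dividing k(k−1), let d, m, r ∈ ℕ, and for 1 ≤ i ≤ m and 1 ≤ s ≤ d let a_s^{(i)} be integers with l·a_s^{(i)} + k ∉ {0, −1}. Then for every finite coloring χ : ℤ → {1,…,r} there exist positive integers d′ and c and a color t such that for every i ∈ {1,…,m}, the unique integer wᵢ satisfying l·wᵢ + k = (l·d′ + k)·(l·a₁^{(i)} + k)^{c}·(l·a₂^{(i)} + k)^{c²}·⋯·(l·a_d^{(i)} + k)^{c^d} has χ(wᵢ) = t. -/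
/-!
Put `A i s = l * a i s + k`. Since `l ∣ k * (k - 1)`, `k` is idempotent modulo `l`, so
`P * ∏ i, ∏ s, A i s ^ v i s ≡ k [ZMOD l]` for every `P ≡ k` and every exponent vector
`v : Fin m → Fin d → ℤ` with `v ≥ 0`. Colouring each `v` by the colour of the corresponding `w`
reduces the theorem to the polynomial van der Waerden theorem in the group `Fin m → Fin d → ℤ`
for the polynomials `c ↦ (c ^ (s + 1))ₛ` placed in block `i`.

That theorem is proved for `V`-valued polynomials without constant term by PET induction in
Walters' colour-focusing form. If `q` is a member of least degree of the family `F`, the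
polynomials `n ↦ f (n + h) - f h - q n` form a family of smaller weight (the numbers of distinct
leading coefficients in each degree, compared from the top degree down), and with it a focused
chain of points for `F` is lengthened by one point; a chain longer than the number of colours
contains two points of the same colour.
-/

open Finset
open scoped Pointwise

theorem Pi.toColex_lt_of_le_of_lt {ι β : Type*} [LinearOrder ι] [Fintype ι] [PartialOrder β]
    {x y : ι → β} {i : ι} (hle : ∀ j, i < j → x j ≤ y j) (hlt : x i < y i) :
    toColex x < toColex y := by
  classical
  let s : Finset ι := {j | i ≤ j ∧ x j ≠ y j}
  have hi : i ∈ s := mem_filter.2 ⟨mem_univ i, le_rfl, hlt.ne⟩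
  refine ⟨s.max' ⟨i, hi⟩, fun j hj => ?_, ?_⟩
  · by_contra hne
    exact (le_max' s j (mem_filter.2 ⟨mem_univ j, (le_max' s i hi).trans hj.le, hne⟩)).not_gt hj
  · obtain ⟨-, him, hne⟩ := mem_filter.1 (max'_mem s ⟨i, hi⟩)
    rcases him.eq_or_lt with h | h
    · rwa [← h]
    · exact (hle _ h).lt_of_ne hne

theorem Fintype.exists_lt_le_card_map_eq {κ : Type*} [Fintype κ] (g : ℕ → κ) :
    ∃ p p', p < p' ∧ p' ≤ Fintype.card κ ∧ g p = g p' := by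
  obtain ⟨p, p', hne, hg⟩ :=
    Fintype.exists_ne_map_eq_of_card_lt (fun p : Fin (Fintype.card κ + 1) => g p) (by simp)
  rcases Fin.lt_or_lt_of_ne hne with h | h
  · exact ⟨p, p', h, Nat.lt_succ_iff.1 p'.isLt, hg⟩
  · exact ⟨p', p, h, Nat.lt_succ_iff.1 p.isLt, hg.symm⟩

theorem Finset.sum_Ico_le_mul {c : ℕ → ℕ} {N p p' : ℕ} (hc : ∀ t ∈ Ico p p', c t ≤ N) :
    ∑ t ∈ Ico p p', c t ≤ (p' - p) * N := by
  simpa using sum_le_card_nsmul _ _ _ hc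

theorem Nat.sum_range_pow_mul_choose_add (n h s : ℕ) :
    ∑ e ∈ range (s + 1), n ^ (e + 1) * ((s + 1).choose (e + 1) * h ^ (s - e)) + h ^ (s + 1)
      = (n + h) ^ (s + 1) := by
  rw [add_pow, sum_range_succ' _ (s + 1)]
  simp only [pow_zero, one_mul, Nat.choose_zero_right, Nat.sub_zero, Nat.cast_id, mul_one]
  congr 1
  refine sum_congr rfl fun e _ => ?_
  rw [Nat.add_sub_add_right]
  ring

namespace PolynomialVdW

variable {V : Type} [AddCommGroup V] {D : ℕ}

def eval (p : Fin D → V) (n : ℕ) : V := ∑ e : Fin D, n ^ ((e : ℕ) + 1) • p e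

@[simp] theorem eval_zero (n : ℕ) : eval (0 : Fin D → V) n = 0 := by simp [eval]

@[simp] theorem eval_at_zero (p : Fin D → V) : eval p 0 = 0 := by simp [eval]

-- `(s + 1).choose (e + 1) = 0` for `s < e`, so the truncated subtraction `s - e` is harmless.
def derive (q f : Fin D → V) (h : ℕ) : Fin D → V :=
  fun e => ∑ s : Fin D, (((s : ℕ) + 1).choose ((e : ℕ) + 1) * h ^ ((s : ℕ) - e)) • f s - q e

theorem sum_fin_pow_mul_choose_add (n h : ℕ) (s : Fin D) :
    ∑ e : Fin D, n ^ ((e : ℕ) + 1) * (((s : ℕ) + 1).choose ((e : ℕ) + 1) * h ^ ((s : ℕ) - e))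
      + h ^ ((s : ℕ) + 1) = (n + h) ^ ((s : ℕ) + 1) := by
  rw [Fin.sum_univ_eq_sum_range
      (fun e => n ^ (e + 1) * (((s : ℕ) + 1).choose (e + 1) * h ^ ((s : ℕ) - e))),
    ← Nat.sum_range_pow_mul_choose_add n h s]
  congr 1
  refine (sum_subset (range_subset_range.2 s.isLt) fun e he hes => ?_).symm
  rw [Nat.choose_eq_zero_of_lt (by simp at he hes; omega), zero_mul, mul_zero]

theorem eval_derive (q f : Fin D → V) (h n : ℕ) :
    eval (derive q f h) n = eval f (n + h) - eval f h - eval q n := by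
  have key (s : Fin D) :
      (∑ e : Fin D, n ^ ((e : ℕ) + 1) * (((s : ℕ) + 1).choose ((e : ℕ) + 1) * h ^ ((s : ℕ) - e)))
        • f s = (n + h) ^ ((s : ℕ) + 1) • f s - h ^ ((s : ℕ) + 1) • f s := by
    rw [eq_sub_iff_add_eq, ← add_smul, sum_fin_pow_mul_choose_add]
  simp only [eval, derive, smul_sub, sum_sub_distrib, smul_sum, ← mul_smul]
  rw [sum_comm]
  simp only [← sum_smul, key, sum_sub_distrib]

theorem derive_apply_eq_sub {q f : Fin D → V} {h : ℕ} {e : Fin D} (hf : ∀ s, e < s → f s = 0) :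
    derive q f h e = f e - q e := by
  rw [derive, sum_eq_single e]
  · simp
  · intro s _ hse
    rcases hse.lt_or_gt with hs | hs
    · rw [Nat.choose_eq_zero_of_lt (by simpa using hs), zero_mul, zero_smul]
    · rw [hf s hs, smul_zero]
  · simp

-- Keeping `u` in the window `b + S` lets the induction colour a point by the colours of finitely
-- many of its translates.
def IsVdWFamily (F : Finset (Fin D → V)) : Prop :=
  ∀ (κ : Type) [Fintype κ], ∃ (N : ℕ) (S : Finset V), ∀ (χ : V → κ) (b : V),
    ∃ u c, 0 < c ∧ c ≤ N ∧ u - b ∈ S ∧ ∀ f ∈ F, χ (u + eval f c) = χ u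

def IsFocusedChain {κ : Type} (F : Finset (Fin D → V)) (χ : V → κ) (j : ℕ) (y : ℕ → V)
    (c : ℕ → ℕ) : Prop :=
  ∀ p p', p ≤ p' → p' ≤ j → ∀ f ∈ F, χ (y p + eval f (∑ t ∈ Ico p p', c t)) = χ (y p')

def HasFocusedChains (F : Finset (Fin D → V)) (j : ℕ) : Prop :=
  ∀ (κ : Type) [Fintype κ], ∃ (N : ℕ) (S : Finset V), ∀ (χ : V → κ) (b : V),
    ∃ (y : ℕ → V) (c : ℕ → ℕ), (∀ p ≤ j, y p - b ∈ S) ∧ (∀ t < j, 0 < c t ∧ c t ≤ N) ∧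
      IsFocusedChain F χ j y c

theorem isVdWFamily_empty : IsVdWFamily (∅ : Finset (Fin D → V)) :=
  fun _ _ => ⟨1, {0}, fun _ b => ⟨b, 1, one_pos, le_rfl, by simp, by simp⟩⟩

theorem hasFocusedChains_zero (F : Finset (Fin D → V)) : HasFocusedChains F 0 :=
  fun _ _ => ⟨0, {0}, fun _ b => ⟨fun _ => b, fun _ => 0, by simp, by simp, by
    intro p p' hpp' hp'
    obtain rfl : p = 0 := by omega
    obtain rfl : p' = 0 := by omega
    simp⟩⟩

theorem IsVdWFamily.of_hasFocusedChains {F : Finset (Fin D → V)}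
    (hF : ∀ j, HasFocusedChains F j) : IsVdWFamily F := by
  intro κ _
  obtain ⟨N, S, hS⟩ := hF (Fintype.card κ) κ
  refine ⟨Fintype.card κ * N, S, fun χ b => ?_⟩
  obtain ⟨y, c, hy, hc, hchain⟩ := hS χ b
  obtain ⟨p, p', hpp', hp', hχ⟩ := Fintype.exists_lt_le_card_map_eq (χ ∘ y)
  refine ⟨y p, ∑ t ∈ Ico p p', c t, ?_, ?_, hy p (by omega),
    fun f hf => (hchain p p' hpp'.le hp' f hf).trans hχ.symm⟩
  · exact sum_pos (fun t ht => (hc t (by simp at ht; omega)).1) (nonempty_Ico.2 hpp')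
  · calc _ ≤ (p' - p) * N := sum_Ico_le_mul fun t ht => (hc t (by simp at ht; omega)).2
      _ ≤ Fintype.card κ * N := Nat.mul_le_mul_right _ (by omega)

theorem IsFocusedChain.extend {κ : Type} {F : Finset (Fin D → V)} {χ : V → κ} {q : Fin D → V}
    {n j : ℕ} {y : ℕ → V} {c : ℕ → ℕ}
    (hchain : IsFocusedChain F (fun v => (χ v, χ (v - eval q n))) j y c)
    (hlast : ∀ p ≤ j, ∀ f ∈ F, χ (y p - eval q n + eval f (∑ t ∈ Ico p j, c t + n))
      = χ (y p + eval f (∑ t ∈ Ico p j, c t))) :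
    IsFocusedChain F χ (j + 1) (Function.update (y · - eval q n) (j + 1) (y j))
      (Function.update c j n) := by
  intro p p' hpp' hp' f hf
  obtain rfl | hpp' := hpp'.eq_or_lt
  · simp
  have hsum (p' : ℕ) (hp' : p' ≤ j) :
      ∑ t ∈ Ico p p', Function.update c j n t = ∑ t ∈ Ico p p', c t :=
    sum_congr rfl fun t ht => Function.update_of_ne (by simp at ht; omega) _ _
  rw [Function.update_of_ne (show p ≠ j + 1 by omega)]
  rcases hp'.lt_or_eq with hp' | rfl
  · rw [Function.update_of_ne hp'.ne, hsum p' (by omega)]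
    simpa only [sub_add_eq_add_sub] using congrArg Prod.snd (hchain p p' hpp'.le (by omega) f hf)
  · rw [Function.update_self, sum_Ico_succ_top (by omega), Function.update_self, hsum j le_rfl]
    exact (hlast p (by omega) f hf).trans (congrArg Prod.fst (hchain p j (by omega) le_rfl f hf))

variable [DecidableEq V]

def degree (p : Fin D → V) : WithBot (Fin D) := ({e | p e ≠ 0} : Finset (Fin D)).max

theorem apply_eq_zero_of_degree_lt {p : Fin D → V} {e : Fin D} (he : degree p < e) :
    p e = 0 := by
  by_contra hpe
  exact (le_max (mem_filter.2 ⟨mem_univ e, hpe⟩)).not_gt he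

theorem degree_eq_coe_iff {p : Fin D → V} {e : Fin D} :
    degree p = e ↔ p e ≠ 0 ∧ ∀ e', e < e' → p e' = 0 := by
  refine ⟨fun h => ⟨(mem_filter.1 (mem_of_max h)).2, fun e' he' =>
    apply_eq_zero_of_degree_lt (h ▸ WithBot.coe_lt_coe.2 he')⟩, fun ⟨he, hgt⟩ => ?_⟩
  refine le_antisymm (Finset.max_le fun e' he' => WithBot.coe_le_coe.2 ?_)
    (le_max (mem_filter.2 ⟨mem_univ e, he⟩))
  exact not_lt.1 fun h => (mem_filter.1 he').2 (hgt e' h)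

theorem exists_degree_eq_coe {p : Fin D → V} (hp : p ≠ 0) : ∃ e : Fin D, degree p = e := by
  obtain ⟨e, he⟩ := Function.ne_iff.1 hp
  exact max_of_mem (mem_filter.2 ⟨mem_univ e, he⟩)

theorem degree_derive_eq_coe {q f : Fin D → V} {h : ℕ} {e : Fin D} (hf : f ≠ 0)
    (hqf : degree q ≤ degree f) (hqe : degree q ≤ e) (hg : degree (derive q f h) = e) :
    degree f = e ∧ derive q f h e = f e - q e := by
  obtain ⟨e', he'⟩ := exists_degree_eq_coe hf
  have hf_gt : ∀ s, e' < s → f s = 0 :=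
    fun s hs => apply_eq_zero_of_degree_lt (he' ▸ WithBot.coe_lt_coe.2 hs)
  rw [degree_eq_coe_iff] at hg
  obtain rfl : e' = e := by
    rcases lt_trichotomy e' e with h' | h' | h'
    · refine absurd ?_ hg.1
      rw [derive_apply_eq_sub fun s hs => hf_gt s (h'.trans hs), hf_gt e h',
        apply_eq_zero_of_degree_lt (hqf.trans_lt (he' ▸ WithBot.coe_lt_coe.2 h')), sub_zero]
    · exact h'
    · refine absurd (hg.2 e' h') ?_
      rw [derive_apply_eq_sub hf_gt,
        apply_eq_zero_of_degree_lt (hqe.trans_lt (WithBot.coe_lt_coe.2 h')), sub_zero]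
      exact (degree_eq_coe_iff.1 he').1
  exact ⟨he', derive_apply_eq_sub hf_gt⟩

def leadingCoeffs (F : Finset (Fin D → V)) (e : Fin D) : Finset V :=
  {f ∈ F | degree f = e}.image (· e)

theorem ne_zero_of_mem_leadingCoeffs {F : Finset (Fin D → V)} {e : Fin D} {x : V}
    (hx : x ∈ leadingCoeffs F e) : x ≠ 0 := by
  obtain ⟨f, hf, rfl⟩ := mem_image.1 hx
  exact (degree_eq_coe_iff.1 (mem_filter.1 hf).2).1

def weight (F : Finset (Fin D → V)) : Colex (Fin D → ℕ) :=
  toColex fun e => #(leadingCoeffs F e)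

def derivedFamily (q : Fin D → V) (F : Finset (Fin D → V)) (H : ℕ) : Finset (Fin D → V) :=
  image₂ (derive q) F (range (H + 1))

section derivedFamily

variable {q : Fin D → V} {F : Finset (Fin D → V)} {H : ℕ}

theorem exists_of_mem_leadingCoeffs_derivedFamily
    (hmin : ∀ f ∈ F, f ≠ 0 → degree q ≤ degree f) {e : Fin D} (hqe : degree q ≤ e) {x : V}
    (hx : x ∈ leadingCoeffs (derivedFamily q {f ∈ F | f ≠ 0} H) e) :
    ∃ f ∈ F, degree f = e ∧ x = f e - q e := by
  obtain ⟨g, hg, rfl⟩ := mem_image.1 hx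
  obtain ⟨hgG, hge⟩ := mem_filter.1 hg
  obtain ⟨f, hf, h, -, rfl⟩ := mem_image₂.1 hgG
  obtain ⟨hfF, hf0⟩ := mem_filter.1 hf
  obtain ⟨hfe, hval⟩ := degree_derive_eq_coe hf0 (hmin f hfF hf0) hqe hge
  exact ⟨f, hfF, hfe, hval⟩

theorem weight_derivedFamily_lt (hq : q ∈ F) (hq0 : q ≠ 0)
    (hmin : ∀ f ∈ F, f ≠ 0 → degree q ≤ degree f) (H : ℕ) :
    weight (derivedFamily q {f ∈ F | f ≠ 0} H) < weight F := by
  obtain ⟨e₀, he₀⟩ := exists_degree_eq_coe hq0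
  have hq_lead : q e₀ ∈ leadingCoeffs F e₀ := mem_image_of_mem _ (mem_filter.2 ⟨hq, he₀⟩)
  refine Pi.toColex_lt_of_le_of_lt (i := e₀) (fun e he => card_le_card fun x hx => ?_) ?_
  · obtain ⟨f, hf, hfe, rfl⟩ :=
      exists_of_mem_leadingCoeffs_derivedFamily hmin (he₀ ▸ WithBot.coe_le_coe.2 he.le) hx
    rw [apply_eq_zero_of_degree_lt (p := q) (he₀ ▸ WithBot.coe_lt_coe.2 he), sub_zero]
    exact mem_image_of_mem _ (mem_filter.2 ⟨hf, hfe⟩)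
  · -- in degree `e₀` the leading coefficients are shifted by `- q e₀`, and `q e₀` itself is lost
    calc _ ≤ #(((leadingCoeffs F e₀).erase (q e₀)).image (· - q e₀)) := by
          refine card_le_card fun x hx => ?_
          obtain ⟨f, hf, hfe, rfl⟩ := exists_of_mem_leadingCoeffs_derivedFamily hmin he₀.le hx
          have hfq : f e₀ ≠ q e₀ := sub_ne_zero.1 (ne_zero_of_mem_leadingCoeffs hx)
          exact mem_image_of_mem _ (mem_erase.2 ⟨hfq, mem_image_of_mem _ (mem_filter.2 ⟨hf, hfe⟩)⟩)
      _ ≤ #((leadingCoeffs F e₀).erase (q e₀)) := card_image_le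
      _ < #(leadingCoeffs F e₀) := card_erase_lt_of_mem hq_lead

end derivedFamily

theorem IsVdWFamily.of_filter_ne_zero {F : Finset (Fin D → V)}
    (hF : IsVdWFamily {f ∈ F | f ≠ 0}) : IsVdWFamily F := by
  intro κ _
  obtain ⟨N, S, hS⟩ := hF κ
  refine ⟨N, S, fun χ b => ?_⟩
  obtain ⟨u, c, hc, hcN, hu, hmono⟩ := hS χ b
  refine ⟨u, c, hc, hcN, hu, fun f hf => ?_⟩
  obtain rfl | hf0 := eq_or_ne f 0
  · simp
  · exact hmono f (mem_filter.2 ⟨hf, hf0⟩)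

theorem HasFocusedChains.succ {q : Fin D → V} {F : Finset (Fin D → V)} {j : ℕ}
    (hG : ∀ H, IsVdWFamily (derivedFamily q F H)) (hF : HasFocusedChains F j) :
    HasFocusedChains F (j + 1) := by
  intro κ _
  obtain ⟨A, S, hS⟩ := hF (κ × κ)
  let W : Finset V := S + image₂ eval F (range (j * A + 1))
  obtain ⟨N, T, hT⟩ := hG (j * A) (W → κ)
  refine ⟨max A N, S + T + (range (N + 1)).image (- eval q ·), fun χ b => ?_⟩
  obtain ⟨u, n, hn, hnN, hu, hmono⟩ := hT (fun v w => χ (v + w)) b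
  obtain ⟨y, c, hy, hc, hchain⟩ := hS (fun v => (χ v, χ (v - eval q n))) u
  refine ⟨_, _, fun p hp => ?_, fun t ht => ?_, hchain.extend fun p hp f hf => ?_⟩
  · have hmem (p ν : ℕ) (hp : p ≤ j) (hν : ν ≤ N) :
        y p - eval q ν - b ∈ S + T + (range (N + 1)).image (- eval q ·) := by
      rw [show y p - eval q ν - b = y p - u + (u - b) + -eval q ν by abel]
      exact add_mem_add (add_mem_add (hy p hp) hu) (mem_image_of_mem _ (mem_range.2 (by omega)))
    rcases hp.lt_or_eq with hp | rfl
    · rw [Function.update_of_ne hp.ne]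
      exact hmem p n (by omega) hnN
    · simpa using hmem j 0 le_rfl (Nat.zero_le N)
  · rcases (Nat.lt_succ_iff.1 ht).lt_or_eq with ht | rfl
    · rw [Function.update_of_ne ht.ne]
      exact ⟨(hc t ht).1, (hc t ht).2.trans (le_max_left _ _)⟩
    · rw [Function.update_self]
      exact ⟨hn, le_max_of_le_right hnN⟩
  · set σ := ∑ t ∈ Ico p j, c t
    have hσ : σ ∈ range (j * A + 1) := mem_range.2 <| Nat.lt_succ_of_le <|
      (sum_Ico_le_mul fun t ht => (hc t (by simp at ht; omega)).2).trans
        (Nat.mul_le_mul_right _ (Nat.sub_le _ _))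
    have hw : y p - u + eval f σ ∈ W := add_mem_add (hy p hp) (mem_image₂_of_mem hf hσ)
    have hder := congrFun (hmono _ (mem_image₂_of_mem hf hσ)) ⟨_, hw⟩
    simp only [eval_derive] at hder
    calc χ (y p - eval q n + eval f (σ + n))
        = χ (u + (eval f (n + σ) - eval f σ - eval q n) + (y p - u + eval f σ)) := by
          rw [add_comm σ n]; congr 1; abel
      _ = χ (y p + eval f σ) := by rw [hder]; congr 1; abel

theorem isVdWFamily (F : Finset (Fin D → V)) : IsVdWFamily F := by
  refine (InvImage.wf weight wellFounded_lt).induction F fun F ih => ?_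
  apply IsVdWFamily.of_filter_ne_zero
  obtain h | hne := ({f ∈ F | f ≠ 0} : Finset (Fin D → V)).eq_empty_or_nonempty
  · rw [h]
    exact isVdWFamily_empty
  obtain ⟨q, hq, hmin⟩ := exists_min_image _ degree hne
  obtain ⟨hqF, hq0⟩ := mem_filter.1 hq
  refine IsVdWFamily.of_hasFocusedChains fun j => ?_
  induction j with
  | zero => exact hasFocusedChains_zero _
  | succ j hj => exact hj.succ fun H => ih _ <|
      weight_derivedFamily_lt hqF hq0 (fun f hf hf0 => hmin f (mem_filter.2 ⟨hf, hf0⟩)) H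

end PolynomialVdW

open PolynomialVdW

section ExpProd

variable {m d : ℕ}

-- `toNat` truncates negative exponents to `0`; only exponent vectors `v ≥ 0` are used.
def expProd (A v : Fin m → Fin d → ℤ) : ℤ := ∏ i, ∏ s, A i s ^ (v i s).toNat

theorem expProd_add (A : Fin m → Fin d → ℤ) {u v : Fin m → Fin d → ℤ} (hu : 0 ≤ u)
    (hv : 0 ≤ v) : expProd A (u + v) = expProd A u * expProd A v := by
  simp only [expProd, ← prod_mul_distrib, ← pow_add]
  refine prod_congr rfl fun i _ => prod_congr rfl fun s _ => ?_
  rw [Pi.add_apply, Pi.add_apply, Int.toNat_add (hu i s) (hv i s)]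

theorem expProd_single (A : Fin m → Fin d → ℤ) (i : Fin m) (e : Fin d → ℕ) :
    expProd A (Pi.single i fun s => (e s : ℤ)) = ∏ s, A i s ^ e s := by
  rw [expProd, Fintype.prod_eq_single i fun j hj => by simp [hj]]
  simp

theorem expProd_ne_zero {A : Fin m → Fin d → ℤ} (hA : ∀ i s, A i s ≠ 0) (v : Fin m → Fin d → ℤ) :
    expProd A v ≠ 0 :=
  prod_ne_zero_iff.2 fun i _ => prod_ne_zero_iff.2 fun s _ => pow_ne_zero _ (hA i s)

theorem mul_expProd_modEq {l k P : ℤ} {A : Fin m → Fin d → ℤ} (hk : k * k ≡ k [ZMOD l])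
    (hA : ∀ i s, A i s ≡ k [ZMOD l]) (hP : P ≡ k [ZMOD l]) (v : Fin m → Fin d → ℤ) :
    P * expProd A v ≡ k [ZMOD l] := by
  let M : Submonoid ℤ :=
    { carrier := {y | k * y ≡ k [ZMOD l]}
      one_mem' := by simp [Int.ModEq.refl]
      mul_mem' := fun {y z} (hy : k * y ≡ k [ZMOD l]) (hz : k * z ≡ k [ZMOD l]) =>
        show k * (y * z) ≡ k [ZMOD l] by rw [← mul_assoc]; exact (hy.mul_right z).trans hz }
  have hmem : expProd A v ∈ M := prod_mem fun i _ => prod_mem fun s _ =>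
    pow_mem (show k * A i s ≡ k [ZMOD l] from ((hA i s).mul_left k).trans hk) _
  exact (hP.mul_right _).trans hmem

def coordPoly (i : Fin m) : Fin d → Fin m → Fin d → ℤ := fun e => Pi.single i (Pi.single e 1)

theorem eval_coordPoly (i : Fin m) (c : ℕ) :
    eval (coordPoly (d := d) i) c = Pi.single i fun s : Fin d => ((c ^ ((s : ℕ) + 1) : ℕ) : ℤ) := by
  ext j s
  by_cases hj : j = i
  · subst hj
    simp [eval, coordPoly, Pi.single_apply]
  · simp [eval, coordPoly, hj]

end ExpProd

theorem Int.pos_of_mul_add_eq {l k x y P : ℤ} (hl : l ≠ 0) (h : l * x + k = (l * y + k) * P)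
    (hyP : |k| * (|P| + 1) < y * P) : 0 < x := by
  have h' : l * (x - y * P) = k * (P - 1) := by linear_combination h
  have hbound : |x - y * P| < y * P :=
    calc |x - y * P| ≤ |l| * |x - y * P| := le_mul_of_one_le_left (abs_nonneg _) (one_le_abs hl)
      _ = |k| * |P - 1| := by rw [← abs_mul, ← abs_mul, h']
      _ ≤ |k| * (|P| + 1) :=
        mul_le_mul_of_nonneg_left ((abs_sub _ _).trans (by simp)) (abs_nonneg _)
      _ < y * P := hyP
  linarith [neg_abs_le (x - y * P)]

/-- An analogue of the polynomial van der Waerden theorem for symmetric polynomials. -/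
theorem stmt6 (l k : ℤ) (hl : l ≠ 0) (hdvd : l ∣ k * (k - 1)) (d m r : ℕ)
    (a : Fin m → Fin d → ℤ)
    (ha : ∀ i s, l * a i s + k ≠ 0 ∧ l * a i s + k ≠ -1)
    (χ : ℤ → Fin r) :
    ∃ d' : ℤ, 0 < d' ∧ ∃ c : ℕ, 0 < c ∧ ∃ t : Fin r, ∀ i : Fin m,
      ∃ w : ℤ,
        l * w + k = (l * d' + k) * ∏ s : Fin d, (l * a i s + k) ^ c ^ ((s : ℕ) + 1) ∧
        χ w = t := by
  set A : Fin m → Fin d → ℤ := fun i s => l * a i s + k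
  have hk : k * k ≡ k [ZMOD l] := (Int.modEq_iff_dvd.2 (by convert hdvd using 1; ring)).symm
  -- colouring both signs `ε` at once makes `d'` positive whatever the sign of `expProd A u`
  let P (ε : SignType) : ℤ := l * ((2 * |k| + 1) * ε) + k
  let w (ε : SignType) (v : Fin m → Fin d → ℤ) : ℤ := (P ε * expProd A v - k) / l
  have hA (i s) : A i s ≡ k [ZMOD l] := (Int.modEq_iff_dvd.2 ⟨a i s, by ring⟩).symm
  have hP (ε) : P ε ≡ k [ZMOD l] := (Int.modEq_iff_dvd.2 ⟨(2 * |k| + 1) * ε, by ring⟩).symm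
  have hw (ε v) : l * w ε v + k = P ε * expProd A v := by
    rw [Int.mul_ediv_cancel' (mul_expProd_modEq hk hA (hP ε) v).symm.dvd, sub_add_cancel]
  obtain ⟨N, S, hS⟩ := isVdWFamily ((univ : Finset (Fin m)).image (coordPoly (d := d)))
    (SignType → Fin r)
  obtain ⟨b, hb⟩ := S.finite_toSet.bddBelow
  obtain ⟨u, c, hc, -, huS, hmono⟩ := hS (fun v ε => χ (w ε v)) (-b)
  have hu : 0 ≤ u := by simpa using hb huS
  set ε := SignType.sign (expProd A u)
  refine ⟨w ε u, Int.pos_of_mul_add_eq hl (hw ε u) ?_, c, hc, χ (w ε u), fun i =>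
    ⟨w ε (u + eval (coordPoly i) c), ?_, congrFun (hmono _ (mem_image_of_mem _ (mem_univ i))) ε⟩⟩
  · have h1 : 1 ≤ |expProd A u| := Int.one_le_abs (expProd_ne_zero (fun i s => (ha i s).1) u)
    rw [mul_assoc, sign_mul_self]
    nlinarith [abs_nonneg k]
  · rw [hw, eval_coordPoly, expProd_add A hu (Pi.single_nonneg.2 fun _ => Int.natCast_nonneg _),
      expProd_single, ← mul_assoc, ← hw]
end

section
/- Let n ∈ ℕ and let a₁, …, aₙ be positive integers. Then for every finite coloring χ : ℤ → {1,…,r} there exist k ∈ ℕ, positive integers x, b₁, …, b_k, and a color t such that all the elements x, b₁, …, b_k, ∏_{i=1}^{k} bᵢ, and x·a_j^{b₁+⋯+b_k} for 1 ≤ j ≤ n, receive color t under χ. -/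
/-!
Let `p₀` be an additively idempotent ultrafilter on `ℕ+` and `L` a minimal closed left ideal of
`(βℕ+, ·)` inside `βℕ+ · p₀`; some colour class `T` belongs to some `p ∈ L`. Then `T` is
multiplicatively piecewise syndetic, and since `p = q · p₀`, some translate `x₀⁻¹ T` lies in `p₀`,
so by Hindman's theorem `T` contains all nonempty subsums of suitable weights `wᵢ`.

Evaluate a word over the alphabet `{1, A₁, …, Aₙ}` as `∏ᵢ letterᵢ ^ wᵢ` and colour it by an
`f ∈ F` with `f · word · u ∈ T` (`F` and `u` from piecewise syndeticity). On a monochromatic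
Hales–Jewett line with wildcard set `S`, the point `Aⱼ` evaluates to `Aⱼ ^ d` times the point `1`,
where `d = ∑_{i ∈ S} wᵢ ∈ T`; this gives `x, x · Aⱼ ^ d ∈ T`, and one takes `k = 1`, `b₁ = d`.
-/

open Filter Finset Hindman Combinatorics

attribute [local instance] Ultrafilter.mul Ultrafilter.add Ultrafilter.semigroup
  Ultrafilter.addSemigroup

theorem Ultrafilter.mem_mul_iff {M : Type*} [Mul M] {U V : Ultrafilter M} {A : Set M} :
    A ∈ U * V ↔ {x | {y | x * y ∈ A} ∈ V} ∈ U :=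
  Ultrafilter.eventually_mul U V (· ∈ A)

section LeftIdeal

variable {M : Type*} [Semigroup M]

def IsClosedLeftIdeal (N : Set (Ultrafilter M)) : Prop :=
  N.Nonempty ∧ IsClosed N ∧ ∀ u, ∀ x ∈ N, u * x ∈ N

theorem isClosedLeftIdeal_range_mul_right (z : Ultrafilter M) :
    IsClosedLeftIdeal (Set.range (· * z)) := by
  refine ⟨⟨z * z, z, rfl⟩, (isCompact_range (Ultrafilter.continuous_mul_left z)).isClosed, ?_⟩
  rintro u _ ⟨v, rfl⟩
  exact ⟨u * v, mul_assoc u v z⟩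

theorem exists_minimal_isClosedLeftIdeal_subset {N : Set (Ultrafilter M)}
    (hN : IsClosedLeftIdeal N) : ∃ L ⊆ N, Minimal IsClosedLeftIdeal L := by
  refine zorn_superset_nonempty {N | IsClosedLeftIdeal N} (fun c hc hchain hne => ?_) N hN
  have : Nonempty c := hne.to_subtype
  refine ⟨⋂₀ c, ⟨?_, isClosed_sInter fun K hK => (hc hK).2.1, ?_⟩,
    fun K hK => Set.sInter_subset_of_mem hK⟩
  · exact IsCompact.nonempty_sInter_of_directed_nonempty_isCompact_isClosed
      (IsChain.directedOn hchain.symm) (fun K hK => (hc hK).1)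
      (fun K hK => (hc hK).2.1.isCompact) (fun K hK => (hc hK).2.1)
  · exact fun u x hx => Set.mem_sInter.2 fun K hK => (hc hK).2.2 u x (hx K hK)

theorem Minimal.exists_mul_eq {L : Set (Ultrafilter M)} (hL : Minimal IsClosedLeftIdeal L)
    {p z : Ultrafilter M} (hp : p ∈ L) (hz : z ∈ L) : ∃ v, v * z = p :=
  hL.2 (isClosedLeftIdeal_range_mul_right z) (by rintro _ ⟨v, rfl⟩; exact hL.1.2.2 v z hz) hp

def IsPiecewiseSyndetic (T : Set M) : Prop :=
  ∃ F : Finset M, ∀ E : Finset M, ∃ u, ∀ e ∈ E, ∃ f ∈ F, f * e * u ∈ T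

theorem Minimal.isPiecewiseSyndetic_of_mem {L : Set (Ultrafilter M)}
    (hL : Minimal IsClosedLeftIdeal L) {p : Ultrafilter M} (hp : p ∈ L) {T : Set M}
    (hT : T ∈ p) : IsPiecewiseSyndetic T := by
  let R : Set M := {x | {y | x * y ∈ T} ∈ p}
  obtain ⟨F, hF⟩ : ∃ F : Finset M, ∀ z, ∃ f ∈ F, f * z ∈ R := by
    by_contra! h
    have : (⨅ f : M, 𝓟 {z | f * z ∉ R}).NeBot :=
      (hasBasis_iInf_principal_finite _).neBot_iff.2 fun {t} ht => by
        obtain ⟨z, hz⟩ := h ht.toFinset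
        exact ⟨z, Set.mem_iInter₂.2 fun f hf => hz f (ht.mem_toFinset.2 hf)⟩
    let q := Ultrafilter.of (⨅ f : M, 𝓟 {z | f * z ∉ R})
    have hq : ∀ f, {z | f * z ∉ R} ∈ q := fun f =>
      Ultrafilter.of_le _ (mem_iInf_of_mem f (mem_principal_self _))
    -- `L` absorbs `q * p`, so `p = (v * q) * p` and `R ∈ v * q`, against the choice of `q`.
    obtain ⟨v, hv⟩ := hL.exists_mul_eq hp (hL.1.2.2 q p hp)
    rw [← hv, ← mul_assoc, Ultrafilter.mem_mul_iff, Ultrafilter.mem_mul_iff] at hT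
    obtain ⟨x, hx⟩ := Ultrafilter.nonempty_of_mem hT
    exact Ultrafilter.compl_notMem_iff.2 hx (hq x)
  choose f hfF hfR using hF
  refine ⟨F, fun E => ?_⟩
  obtain ⟨u, hu⟩ := Ultrafilter.nonempty_of_mem ((biInter_finset_mem E).2 fun e _ => hfR e)
  exact ⟨u, fun e he => ⟨f e, hfF e, Set.mem_iInter₂.1 hu e he⟩⟩

end LeftIdeal

theorem Hindman.FS_map_subset {M N : Type*} [AddSemigroup M] [AddSemigroup N] (f : M →ₙ+ N)
    (a : Stream' M) : FS (a.map f) ⊆ f '' FS a := by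
  suffices ∀ b m, m ∈ FS b → ∀ a : Stream' M, b = a.map f → m ∈ f '' FS a from
    fun m hm => this _ m hm a rfl
  intro b m hm
  induction hm with
  | head' b => rintro a rfl; exact ⟨a.head, FS.head a, rfl⟩
  | tail' b m _ ih =>
    rintro a rfl
    obtain ⟨m', hm', rfl⟩ := ih a.tail rfl
    exact ⟨m', FS.tail a m' hm', rfl⟩
  | cons' b m _ ih =>
    rintro a rfl
    obtain ⟨m', hm', rfl⟩ := ih a.tail rfl
    exact ⟨a.head + m', FS.cons a m' hm', map_add f _ _⟩

theorem PNat.exists_mem_FS_coe_eq_sum (a : Stream' ℕ+) {s : Finset ℕ} (hs : s.Nonempty) :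
    ∃ m ∈ FS a, (m : ℕ) = ∑ i ∈ s, (a.get i : ℕ) :=
  FS_map_subset PNat.coeAddHom a (FS.finsetSum (a.map PNat.coeAddHom) s hs)

theorem exists_weights_subsum_mem_of_mem_mul {p₀ q : Ultrafilter ℕ+} (hp₀ : p₀ + p₀ = p₀)
    {T : Set ℕ+} (hT : T ∈ q * p₀) (ι : Type*) [Fintype ι] :
    ∃ w : ι → ℕ, ∀ s : Finset ι, s.Nonempty →
      ∃ d ∈ T, (d : ℕ) = ∑ i ∈ s, w i := by
  obtain ⟨x, hx⟩ := Ultrafilter.nonempty_of_mem (Ultrafilter.mem_mul_iff.1 hT)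
  obtain ⟨a, ha⟩ := exists_FS_of_large p₀ hp₀ _ hx
  let e : ι ↪ ℕ := (Fintype.equivFin ι).toEmbedding.trans Fin.valEmbedding
  refine ⟨fun i => x * a.get (e i), fun s hs => ?_⟩
  obtain ⟨m, hm, hms⟩ := PNat.exists_mem_FS_coe_eq_sum a (hs.map (f := e))
  refine ⟨x * m, ha hm, ?_⟩
  rw [PNat.mul_coe, hms, sum_map, mul_sum]

theorem Combinatorics.Line.prod_pow_apply {α ι M : Type*} [Fintype ι] [CommMonoid M]
    (l : Line α ι) (f : α → M) (w : ι → ℕ) (x : α) :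
    ∏ i, f (l x i) ^ w i =
      f x ^ (∑ i with l.idxFun i = none, w i) * ∏ i, (l.idxFun i).elim 1 (f · ^ w i) := by
  have hsplit : ∀ i, f (l x i) ^ w i =
      (if l.idxFun i = none then f x ^ w i else 1) * (l.idxFun i).elim 1 (f · ^ w i) := by
    intro i
    cases h : l.idxFun i <;> simp [h]
  simp_rw [hsplit, prod_mul_distrib, ← prod_filter, prod_pow_eq_pow_sum]

theorem exists_mul_pow_mem {n : ℕ} (A : Fin n → ℕ+) {T : Set ℕ+}
    (hT : IsPiecewiseSyndetic T)
    (hsum : ∀ (ι : Type) [Fintype ι], ∃ w : ι → ℕ,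
      ∀ s : Finset ι, s.Nonempty → ∃ d ∈ T, (d : ℕ) = ∑ i ∈ s, w i) :
    ∃ x ∈ T, ∃ d ∈ T, ∀ j, x * A j ^ (d : ℕ) ∈ T := by
  classical
  obtain ⟨F, hF⟩ := hT
  obtain ⟨ι, _, hHJ⟩ := Line.exists_mono_in_high_dimension (Option (Fin n)) F
  obtain ⟨w, hw⟩ := hsum ι
  let letter : Option (Fin n) → ℕ+ := fun o => o.elim 1 A
  let V : (ι → Option (Fin n)) → ℕ+ := fun word => ∏ i, letter (word i) ^ w i
  obtain ⟨u, hu⟩ := hF (univ.image V)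
  choose f hfF hfT using fun word => hu (V word) (mem_image_of_mem V (mem_univ word))
  obtain ⟨l, c, hl⟩ := hHJ fun word => (⟨f word, hfF word⟩ : F)
  have hmem : ∀ o, (c : ℕ+) * V (l o) * u ∈ T := fun o => by
    simpa [← hl o] using hfT (l o)
  obtain ⟨i₀, hi₀⟩ := l.proper
  obtain ⟨d, hd, hdw⟩ := hw {i | l.idxFun i = none} ⟨i₀, by simpa using hi₀⟩
  refine ⟨c * V (l none) * u, hmem none, d, hd, fun j => ?_⟩
  have := hmem (some j)
  simp only [V, Line.prod_pow_apply, ← hdw] at this ⊢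
  convert this using 1
  simp only [letter, Option.elim, one_pow, one_mul]
  ac_rfl

theorem exists_mul_pow_monochromatic {n : ℕ} (A : Fin n → ℕ+) {κ : Type*} [Finite κ]
    (c : ℕ+ → κ) : ∃ x d : ℕ+, c x = c d ∧ ∀ j, c (x * A j ^ (d : ℕ)) = c d := by
  obtain ⟨p₀, hp₀⟩ := exists_idempotent_of_compact_t2_of_continuous_add_left
    (@Ultrafilter.continuous_add_left ℕ+ _)
  obtain ⟨L, hL₀, hL⟩ := exists_minimal_isClosedLeftIdeal_subset
    (isClosedLeftIdeal_range_mul_right p₀)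
  obtain ⟨p, hp⟩ := hL.1.1
  obtain ⟨q, hq⟩ := hL₀ hp
  obtain ⟨t, ht⟩ := (p.map c).eq_pure_of_finite
  have hT : c ⁻¹' {t} ∈ p := by
    rw [← Ultrafilter.mem_map, ht]
    rfl
  obtain ⟨x, hx, d, hd, hxd⟩ := exists_mul_pow_mem A (hL.isPiecewiseSyndetic_of_mem hp hT)
    fun ι _ => exists_weights_subsum_mem_of_mem_mul hp₀ (hq ▸ hT) ι
  exact ⟨x, d, hx.trans hd.symm, fun j => (hxd j).trans hd.symm⟩

/-- For any positive integers `a₁, …, aₙ` and any finite coloring of `ℤ`, there are `k`,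
positive integers `x, b₁, …, b_k` such that `x`, the `bᵢ`'s, `∏ bᵢ` and all
`x·a_j^{b₁+⋯+b_k}` receive the same color. -/
theorem stmt8 (n r : ℕ) (a : Fin n → ℕ) (ha : ∀ j, 0 < a j) (χ : ℤ → Fin r) :
    ∃ K : ℕ, 0 < K ∧ ∃ x : ℕ, 0 < x ∧ ∃ b : Fin K → ℕ, (∀ i, 0 < b i) ∧
      ∃ t : Fin r,
        χ (x : ℤ) = t ∧
        (∀ i : Fin K, χ (b i : ℤ) = t) ∧
        χ ((∏ i, b i : ℕ) : ℤ) = t ∧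
        ∀ j : Fin n, χ ((x * a j ^ (∑ i, b i) : ℕ) : ℤ) = t := by
  obtain ⟨x, d, hxd, hpow⟩ :=
    exists_mul_pow_monochromatic (fun j => ⟨a j, ha j⟩) fun z : ℕ+ => χ (z : ℕ)
  refine ⟨1, one_pos, x, x.pos, fun _ => d, fun _ => d.pos, χ (d : ℕ), hxd, fun _ => rfl,
    by simp, fun j => ?_⟩
  rw [Fin.sum_univ_one]
  exact hpow j
end

section
/- For every finite coloring χ : ℤ → {1,…,r} there exist m, n, p ∈ ℕ, positive integers a₁,…,a_m, b₁,…,bₙ, c₁,…,c_p, and a color t such that the seven numbers ∏_{i=1}^{m} aᵢ, ∏_{j=1}^{n} b_j, ∏_{q=1}^{p} c_q, (∏_{j=1}^{n} b_j)·2^{Σ_{i=1}^{m} aᵢ}, (∏_{j=1}^{n} b_j)·3^{Σ_{i=1}^{m} aᵢ}, (∏_{q=1}^{p} c_q)·2^{(Σ_{i=1}^{m} aᵢ)(Σ_{j=1}^{n} b_j)}, and (∏_{q=1}^{p} c_q)·3^{(Σ_{i=1}^{m} aᵢ)(Σ_{j=1}^{n} b_j)} all receive color t under χ. -/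
open Combinatorics

/-!
By Gallai's theorem (multidimensional van der Waerden) applied to the coloring
`(x, y) ↦ χ (2 ^ x * 3 ^ y)` of `ℕ × ℕ`, there are monochromatic corners
`P, P * 2 ^ d, P * 3 ^ d` whose step `d` is a multiple of any prescribed `g > 0`.
Iterating, we get corners `(Pₙ, dₙ)` with `Pₖ dₖ ∣ dₗ` for `k < l`, and by pigeonhole
three of them, `k < l < l'`, have bases of the same color. Writing `d_{l'} = d_l · v`,
we have `Pₖ ≤ d_l` and `P_l ≤ v`, so `a = (Pₖ, 1, …, 1)` with sum `d_l`,
`b = (P_l, 1, …, 1)` with sum `v`, and `c = (P_{l'})` do the job.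
-/

structure MonoCorner {α : Type*} (χ : ℕ → α) where
  base : ℕ
  step : ℕ
  base_pos : 0 < base
  step_pos : 0 < step
  mul_two_pow : χ (base * 2 ^ step) = χ base
  mul_three_pow : χ (base * 3 ^ step) = χ base

namespace MonoCorner

variable {α : Type*} [Finite α] (χ : ℕ → α)

theorem exists_dvd_step {g : ℕ} (hg : 0 < g) : ∃ C : MonoCorner χ, g ∣ C.step := by
  obtain ⟨e, he, ⟨x, y⟩, _, hmono⟩ := exists_mono_homothetic_copy
    ({(0, 0), (g, 0), (0, g)} : Finset (ℕ × ℕ)) fun p => χ (2 ^ p.1 * 3 ^ p.2)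
  have h₀ := hmono (0, 0) (by simp)
  have h₁ := hmono (g, 0) (by simp)
  have h₂ := hmono (0, g) (by simp)
  simp only [Prod.smul_mk, smul_eq_mul, mul_zero, Prod.mk_add_mk, zero_add] at h₀ h₁ h₂
  refine ⟨⟨2 ^ x * 3 ^ y, e * g, by positivity, by positivity, ?_, ?_⟩, dvd_mul_left g e⟩
  · rw [show 2 ^ x * 3 ^ y * 2 ^ (e * g) = 2 ^ (e * g + x) * 3 ^ y by ring]
    exact h₁.trans h₀.symm
  · rw [show 2 ^ x * 3 ^ y * 3 ^ (e * g) = 2 ^ x * 3 ^ (e * g + y) by ring]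
    exact h₂.trans h₀.symm

theorem exists_chain :
    ∃ C : ℕ → MonoCorner χ, ∀ k l, k < l → (C k).base * (C k).step ∣ (C l).step := by
  obtain ⟨C₀, -⟩ := exists_dvd_step χ one_pos
  choose next hnext using fun C : MonoCorner χ =>
    exists_dvd_step χ (mul_pos C.base_pos C.step_pos)
  let C n := next^[n] C₀
  have hC_succ n : C (n + 1) = next (C n) := Function.iterate_succ_apply' next n C₀
  refine ⟨C, fun k l hkl => ?_⟩
  induction l, hkl using Nat.le_induction with
  | base => rw [hC_succ]; exact hnext _
  | succ l _ ih => rw [hC_succ]; exact ih.trans ((dvd_mul_left _ _).trans (hnext _))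

end MonoCorner

theorem exists_pos_fin_prod_eq_sum_eq {P s : ℕ} (hP : 0 < P) (hPs : P ≤ s) :
    ∃ m, 0 < m ∧ ∃ a : Fin m → ℕ, (∀ i, 0 < a i) ∧ ∏ i, a i = P ∧ ∑ i, a i = s :=
  ⟨s - P + 1, Nat.succ_pos _, Fin.cons P fun _ => 1, Fin.cases hP fun _ => one_pos,
    by simp [Fin.prod_cons], by simp [Fin.sum_cons]; omega⟩

/-- For every finite coloring of `ℤ` there are finite sequences of positive integers
`a₁,…,a_m`, `b₁,…,bₙ`, `c₁,…,c_p` such that the seven numbers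
`∏ aᵢ`, `∏ b_j`, `∏ c_q`, `(∏ b_j)·2^{Σ aᵢ}`, `(∏ b_j)·3^{Σ aᵢ}`,
`(∏ c_q)·2^{(Σ aᵢ)(Σ b_j)}`, `(∏ c_q)·3^{(Σ aᵢ)(Σ b_j)}` all get the same color. -/
theorem stmt9 (r : ℕ) (χ : ℤ → Fin r) :
    ∃ m n p : ℕ, 0 < m ∧ 0 < n ∧ 0 < p ∧
      ∃ a : Fin m → ℕ, (∀ i, 0 < a i) ∧
      ∃ b : Fin n → ℕ, (∀ j, 0 < b j) ∧
      ∃ c : Fin p → ℕ, (∀ q, 0 < c q) ∧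
      ∃ t : Fin r,
        χ ((∏ i, a i : ℕ) : ℤ) = t ∧
        χ ((∏ j, b j : ℕ) : ℤ) = t ∧
        χ ((∏ q, c q : ℕ) : ℤ) = t ∧
        χ (((∏ j, b j) * 2 ^ (∑ i, a i) : ℕ) : ℤ) = t ∧
        χ (((∏ j, b j) * 3 ^ (∑ i, a i) : ℕ) : ℤ) = t ∧
        χ (((∏ q, c q) * 2 ^ ((∑ i, a i) * (∑ j, b j)) : ℕ) : ℤ) = t ∧
        χ (((∏ q, c q) * 3 ^ ((∑ i, a i) * (∑ j, b j)) : ℕ) : ℤ) = t := by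
  obtain ⟨C, hC⟩ := MonoCorner.exists_chain fun n : ℕ => χ n
  obtain ⟨t, ht⟩ := Finite.exists_infinite_fiber fun n => χ (C n).base
  have hfiber := Set.infinite_coe_iff.mp ht
  obtain ⟨k, hk, -⟩ := hfiber.exists_gt 0
  obtain ⟨l, hl, hkl⟩ := hfiber.exists_gt k
  obtain ⟨l', hl', hll'⟩ := hfiber.exists_gt l
  obtain ⟨w, hw⟩ := hC l l' hll'
  have hw_pos : 0 < w := Nat.pos_of_ne_zero fun h => (C l').step_pos.ne' (by simp [hw, h])
  have hk_le : (C k).base ≤ (C l).step :=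
    (Nat.le_mul_of_pos_right _ (C k).step_pos).trans (Nat.le_of_dvd (C l).step_pos (hC k l hkl))
  obtain ⟨m, hm, a, ha, ha_prod, ha_sum⟩ := exists_pos_fin_prod_eq_sum_eq (C k).base_pos hk_le
  obtain ⟨n, hn, b, hb, hb_prod, hb_sum⟩ := exists_pos_fin_prod_eq_sum_eq (C l).base_pos
    (Nat.le_mul_of_pos_right (C l).base hw_pos)
  obtain ⟨p, hp, c, hc, hc_prod, -⟩ := exists_pos_fin_prod_eq_sum_eq (C l').base_pos le_rfl
  have hstep : (C l).step * ((C l).base * w) = (C l').step := by rw [hw]; ring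
  refine ⟨m, n, p, hm, hn, hp, a, ha, b, hb, c, hc, t, ?_⟩
  rw [ha_prod, hb_prod, hc_prod, ha_sum, hb_sum, hstep]
  exact ⟨hk, hl, hl', (C l).mul_two_pow.trans hl, (C l).mul_three_pow.trans hl,
    (C l').mul_two_pow.trans hl', (C l').mul_three_pow.trans hl'⟩
end

section
/- Let r ∈ ℕ and let a₁, …, aₙ be distinct positive integers. Then for every coloring χ of the positive integers with r colors there exist positive integers x, c, a nonnegative integer y, and a color t such that χ(x·2^{c·f(aᵢ)}·(y + c·o(aᵢ))) = t for every i ∈ {1,…,n}. -/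
/-- `f n` is the 2-adic valuation of `n`. -/
def f2 (n : ℕ) : ℕ := padicValNat 2 n

/-- `oddPart n = n / 2^{f(n)}` is the odd part of `n`. -/
def oddPart (n : ℕ) : ℕ := n / 2 ^ f2 n

/-!
Color a point `(e, o)` of `ℕ × ℕ` by the color of `2 ^ e * o`. Gallai's theorem
(`Combinatorics.exists_mono_homothetic_copy`) gives a monochromatic homothetic copy
`b + c • S` of the finite set `S = {(f(aᵢ), o(aᵢ))}`, and
`2 ^ (b₁ + c f(aᵢ)) * (b₂ + c o(aᵢ)) = 2 ^ b₁ * 2 ^ (c f(aᵢ)) * (b₂ + c o(aᵢ))`.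
-/

theorem exists_mono_pow_mul_homothetic_copy {κ : Type*} [Finite κ] (m : ℕ)
    (S : Finset (ℕ × ℕ)) (χ : ℕ → κ) :
    ∃ b : ℕ × ℕ, ∃ c > 0, ∃ t : κ,
      ∀ p ∈ S, χ (m ^ b.1 * m ^ (c * p.1) * (b.2 + c * p.2)) = t := by
  obtain ⟨c, hc, b, t, hmono⟩ :=
    Combinatorics.exists_mono_homothetic_copy S fun p : ℕ × ℕ => χ (m ^ p.1 * p.2)
  refine ⟨b, c, hc, t, fun p hp => ?_⟩
  rw [← hmono p hp]
  simp only [Prod.smul_fst, Prod.smul_snd, Prod.fst_add, Prod.snd_add, smul_eq_mul, pow_add]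
  ring_nf

theorem stmt11_general (r n : ℕ) (a : Fin n → ℕ) (χ : ℕ → Fin r) :
    ∃ x c : ℕ, 0 < x ∧ 0 < c ∧ ∃ y : ℕ, ∃ t : Fin r,
      ∀ i : Fin n, χ (x * 2 ^ (c * f2 (a i)) * (y + c * oddPart (a i))) = t := by
  obtain ⟨b, c, hc, t, hmono⟩ := exists_mono_pow_mul_homothetic_copy 2
    (Finset.univ.image fun i => (f2 (a i), oddPart (a i))) χ
  exact ⟨2 ^ b.1, c, pow_pos two_pos _, hc, b.2, t,
    fun i => hmono _ (Finset.mem_image_of_mem _ (Finset.mem_univ i))⟩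

/-- For distinct positive integers `a₁, …, aₙ` and any `r`-coloring of the positive
integers, there are `x, c > 0` and `y ≥ 0` such that all the numbers
`x·2^{c·f(aᵢ)}·(y + c·o(aᵢ))` receive the same color. -/
theorem stmt11 (r n : ℕ) (a : Fin n → ℕ) (ha : ∀ i, 0 < a i)
    (hainj : Function.Injective a) (χ : ℕ → Fin r) :
    ∃ x c : ℕ, 0 < x ∧ 0 < c ∧ ∃ y : ℕ, ∃ t : Fin r,
      ∀ i : Fin n, χ (x * 2 ^ (c * f2 (a i)) * (y + c * oddPart (a i))) = t :=
  stmt11_general r n a χ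
end

section
/- Let p be an odd prime and n ∈ ℕ. Then for every coloring χ of the positive integers with r colors there exist positive integers x, z, c and a color t such that χ(x·z·(p^i+1)^c − x) = t for every i ∈ {1,…,n}. -/
open Finset

/-- Gallai's theorem in the multiplicative form: the exponent vectors `b + c • eᵢ` form a
homothetic copy of the standard basis of `ℕ^ι`, so one of them is monochromatic. -/
theorem Combinatorics.exists_mono_prod_mul_pow {M ι κ : Type*} [CommMonoid M] [Fintype ι]
    [Finite κ] (g : ι → M) (χ : M → κ) :
    ∃ b : ι → ℕ, ∃ c > 0, ∃ t : κ, ∀ i, χ ((∏ j, g j ^ b j) * g i ^ c) = t := by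
  classical
  obtain ⟨c, hc, b, t, hmono⟩ := Combinatorics.exists_mono_homothetic_copy
    (univ.image fun i : ι => Pi.single i 1) fun v => χ (∏ j, g j ^ v j)
  refine ⟨b, c, hc, t, fun i => ?_⟩
  have hprod :
      ∏ j, g j ^ (c • (Pi.single i 1 : ι → ℕ) + b) j = (∏ j, g j ^ b j) * g i ^ c := by
    simp only [Pi.add_apply, Pi.smul_apply, pow_add, prod_mul_distrib]
    rw [mul_comm]
    congr 1
    rw [Fintype.prod_eq_single i fun j hj => by simp [hj]]
    simp
  rw [← hprod]
  exact hmono _ (mem_image_of_mem _ (mem_univ i))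

theorem stmt17_general (r n : ℕ) (p : ℕ) (χ : ℕ → Fin r) :
    ∃ x z c : ℕ, 0 < x ∧ 0 < z ∧ 0 < c ∧ ∃ t : Fin r,
      ∀ i : ℕ, 1 ≤ i → i ≤ n → χ (x * z * (p ^ i + 1) ^ c - x) = t := by
  obtain ⟨b, c, hc, t, hmono⟩ := Combinatorics.exists_mono_prod_mul_pow
    (fun j : Fin n => p ^ (j + 1 : ℕ) + 1) fun m => χ (m - 1)
  refine ⟨1, ∏ j : Fin n, (p ^ (j + 1 : ℕ) + 1) ^ b j, c, one_pos, by positivity, hc, t,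
    fun i hi hin => ?_⟩
  have := hmono ⟨i - 1, by omega⟩
  rwa [Nat.sub_add_cancel hi, ← one_mul (∏ j : Fin n, _)] at this

/-- For an odd prime `p`, `n ∈ ℕ` and any `r`-coloring of the positive integers,
there are positive `x, z, c` such that all `x·z·(p^i+1)^c − x`, `1 ≤ i ≤ n`,
receive the same color. -/
theorem stmt17 (r n : ℕ) (p : ℕ) (hp : p.Prime) (hodd : p ≠ 2) (χ : ℕ → Fin r) :
    ∃ x z c : ℕ, 0 < x ∧ 0 < z ∧ 0 < c ∧ ∃ t : Fin r,
      ∀ i : ℕ, 1 ≤ i → i ≤ n → χ (x * z * (p ^ i + 1) ^ c - x) = t :=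
  stmt17_general r n p χ
end
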